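/- arXiv:2511.19678 — 3 statements merged into one kernel-verified Lean document; each statement's English description precedes it below -/
import Mathlib

section
/- For every word w with at least two distinct letters, there exists a one-dimensional grid Γ (of some shape ℤ/nℤ) with c_1(w, Γ) = C_1(w); that is, the supremum defining C_1(w) is attained. -/
open scoped BigOperators

namespace WordGrid

variable {α : Type*}

/-- A valid word-search direction in dimension `d`: a nonzero vector with
entries in `{-1, 0, 1}`. -/
def IsDir (d : ℕ) (v : Fin d → ℤ) : Prop :=
  (∀ i, v i = -1 ∨ v i = 0 ∨ v i = 1) ∧ v ≠ 0

/-- `(p, v)` is an appearance of the word `w` in the grid `Γ` of shape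
`ZMod (n 0) × ⋯ × ZMod (n (d-1))`: reading from `p` in direction `v`
(reduced coordinatewise into the shape group) spells out `w`. -/
def Appears {d : ℕ} (n : Fin d → ℕ) (Γ : (∀ i, ZMod (n i)) → α) (w : List α)
    (p : ∀ i, ZMod (n i)) (v : Fin d → ℤ) : Prop :=
  IsDir d v ∧
    ∀ k : Fin w.length, Γ (fun j => p j + (((k : ℤ) * v j : ℤ) : ZMod (n j))) = w.get k

/-- The number of appearances of the word `w` in the grid `Γ`. -/
noncomputable def count {d : ℕ} (n : Fin d → ℕ) (Γ : (∀ i, ZMod (n i)) → α)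
    (w : List α) : ℕ :=
  Set.ncard {pv : (∀ i, ZMod (n i)) × (Fin d → ℤ) | Appears n Γ w pv.1 pv.2}

/-- The concentration of the word `w` in the grid `Γ`: the number of
appearances divided by the size of the grid. -/
noncomputable def conc {d : ℕ} (n : Fin d → ℕ) (Γ : (∀ i, ZMod (n i)) → α)
    (w : List α) : ℝ :=
  (count n Γ w : ℝ) / ((∏ i, n i : ℕ) : ℝ)

/-- `C d w`: the supremum of the concentration of `w` over all `d`-dimensional
grids (of all shapes with every side length positive). -/
noncomputable def C (d : ℕ) (w : List α) : ℝ :=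
  sSup {x : ℝ | ∃ (n : Fin d → ℕ) (Γ : (∀ i, ZMod (n i)) → α),
    (∀ i, 0 < n i) ∧ x = conc n Γ w}

/-- The word `w` contains at least two distinct letters. -/
def TwoLetters (w : List α) : Prop := ∃ x ∈ w, ∃ y ∈ w, x ≠ y



section Aux

variable (w : List α)

def fwd (f : ℤ → α) (p : ℤ) : Prop := ∀ k : Fin w.length, f (p + k) = w.get k

def bwd (f : ℤ → α) (p : ℤ) : Prop := ∀ k : Fin w.length, f (p - k) = w.get k

open Classical in
noncomputable def wt (f : ℤ → α) (p : ℤ) : ℕ :=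
  (if fwd w f p then 1 else 0) + (if bwd w f p then 1 else 0)

noncomputable def cntI (f : ℤ → α) (a : ℤ) (m : ℕ) : ℕ :=
  ∑ j ∈ Finset.range m, wt w f (a + j)

def Per (f : ℤ → α) (m : ℕ) : Prop := ∀ z : ℤ, f (z + m) = f z

variable {w}

lemma per_add_mul {f : ℤ → α} {m : ℕ} (hf : Per f m) (z : ℤ) (c : ℤ) :
    f (z + c * m) = f z := by
  induction c using Int.induction_on with
  | zero => simp
  | succ k ih => rw [show z + (k+1) * m = (z + k * m) + m by ring, hf, ih]
  | pred k ih =>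
      rw [show z + (-k) * m = (z + (-k-1) * m) + m by ring] at ih
      rw [show z + (-(k:ℤ)-1) * m = z + (-k-1) * m by ring, ← hf (z + (-(k:ℤ)-1) * m), ih]

lemma per_emod {f : ℤ → α} {m : ℕ} (hf : Per f m) (z : ℤ) :
    f z = f (z % m) := by
  conv_lhs => rw [← Int.emod_add_mul_ediv z m, mul_comm]
  exact per_add_mul hf _ _

lemma wt_congr {f g : ℤ → α} {p q : ℤ}
    (h : ∀ k : Fin w.length, f (p + k) = g (q + k))
    (h' : ∀ k : Fin w.length, f (p - k) = g (q - k)) :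
    wt w f p = wt w g q := by
  have h1 : fwd w f p ↔ fwd w g q := by
    constructor <;> intro hh k <;> [rw [← h k]; rw [h k]] <;> exact hh k
  have h2 : bwd w f p ↔ bwd w g q := by
    constructor <;> intro hh k <;> [rw [← h' k]; rw [h' k]] <;> exact hh k
  unfold wt
  congr 1
  · by_cases hh : fwd w f p
    · rw [if_pos hh, if_pos (h1.mp hh)]
    · rw [if_neg hh, if_neg (fun hq => hh (h1.mpr hq))]
  · by_cases hh : bwd w f p
    · rw [if_pos hh, if_pos (h2.mp hh)]
    · rw [if_neg hh, if_neg (fun hq => hh (h2.mpr hq))]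

lemma wt_shift {f : ℤ → α} {m : ℕ} (hf : Per f m) (p : ℤ) (c : ℤ) :
    wt w f (p + c * m) = wt w f p := by
  refine wt_congr (fun k => ?_) (fun k => ?_)
  · rw [show p + c * m + k = (p + k) + c * m by ring, per_add_mul hf]
  · rw [show p + c * m - k = (p - k) + c * m by ring, per_add_mul hf]

lemma wt_eq_of_agree {f g : ℤ → α} {p : ℤ}
    (h : ∀ y : ℤ, p - w.length < y → y < p + w.length → f y = g y) :
    wt w f p = wt w g p := by
  refine wt_congr (fun k => ?_) (fun k => ?_) <;>
    exact h _ (by have := k.isLt; omega) (by have := k.isLt; omega)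

lemma cnt_trans {f : ℤ → α} {m : ℕ} (hf : Per f m) (a b : ℤ) :
    cntI w f a m = cntI w f b m := by
  have step : ∀ c : ℤ, cntI w f (c + 1) m = cntI w f c m := by
    intro c
    have e1 : ∑ j ∈ Finset.range (m + 1), wt w f (c + j) =
        cntI w f c m + wt w f (c + m) := by
      rw [cntI, Finset.sum_range_succ]
    have e2 : ∑ j ∈ Finset.range (m + 1), wt w f (c + j) =
        cntI w f (c + 1) m + wt w f c := by
      rw [Finset.sum_range_succ']
      simp only [Nat.cast_add, Nat.cast_one, Nat.cast_zero, add_zero]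
      rw [cntI, add_comm (c:ℤ) 1]
      congr 1
      exact Finset.sum_congr rfl fun j _ => by ring_nf
    have e3 : wt w f (c + m) = wt w f c := by
      have := wt_shift (w := w) hf c 1; rwa [one_mul] at this
    omega
  have stepn : ∀ (k : ℕ) (c : ℤ), cntI w f (c + k) m = cntI w f c m := by
    intro k
    induction k with
    | zero => simp
    | succ k ih =>
        intro c
        rw [show c + ((k:ℕ)+1:ℕ) = (c + k) + 1 by push_cast; ring, step, ih]
  rcases le_total a b with h | h
  · have := stepn (b - a).toNat a
    rw [show a + ((b-a).toNat : ℤ) = b by omega] at this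
    exact this.symm
  · have := stepn (a - b).toNat b
    rw [show b + ((a-b).toNat : ℤ) = a by omega] at this
    exact this

lemma cnt_mono {f g : ℤ → α} (a : ℤ) (m : ℕ) (h : ∀ j : ℤ, wt w f j ≤ wt w g j) :
    cntI w f a m ≤ cntI w g a m :=
  Finset.sum_le_sum fun _ _ => h _

lemma agree_extend {f g : ℤ → α} {a : ℤ} {m : ℕ} (hm : 0 < m) (hper : Per g m)
    (k : ℕ)
    (hag : ∀ z : ℤ, a ≤ z → z < a + m → g z = f z)
    (hstep : ∀ z : ℤ, a + m ≤ z → z < a + m + k → f z = f (z - m)) :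
    ∀ z : ℤ, a ≤ z → z < a + m + k → g z = f z := by
  induction k with
  | zero => intro z h1 h2; exact hag z h1 (by omega)
  | succ k ih =>
      intro z h1 h2
      rcases lt_or_ge z (a + m + k) with h3 | h3
      · exact ih (fun z hz1 hz2 => hstep z hz1 (by omega)) z h1 h3
      · have hz : z = a + m + k := by omega
        have hgz : g z = g (z - m) := by
          rw [← hper (z - m)]; congr 1; ring
        rw [hgz, ih (fun z hz1 hz2 => hstep z hz1 (by omega)) (z - m) (by omega) (by omega)]
        exact (hstep z (by omega) (by omega)).symm

lemma sum_range_split (n m : ℕ) (F : ℕ → ℕ) :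
    ∑ i ∈ Finset.range (n+m), F i = ∑ i ∈ Finset.range n, F i + ∑ i ∈ Finset.range m, F (n+i) := by
  rw [Finset.range_eq_Ico, ← Finset.sum_Ico_consecutive F (Nat.zero_le n) (Nat.le_add_right n m)]
  congr 1
  · rw [Finset.range_eq_Ico]
  rw [Finset.sum_Ico_eq_sum_range, Nat.add_sub_cancel_left]

lemma med {a b x y : ℝ} (hx : 0 < x) (hy : 0 < y) (h : a/x ≤ b/y) :
    (a+b)/(x+y) ≤ b/y := by
  rw [div_le_div_iff₀ (by positivity) hy]
  rw [div_le_div_iff₀ hx hy] at h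
  nlinarith

lemma hdir1 (v : Fin 1 → ℤ) : IsDir 1 v ↔ v = (fun _ => (1:ℤ)) ∨ v = (fun _ => (-1:ℤ)) := by
  constructor
  · rintro ⟨h1, h2⟩
    rcases h1 0 with h | h | h
    · right; funext j; rw [Subsingleton.elim j 0]; exact h
    · exact absurd (funext fun j => by rw [Subsingleton.elim j 0]; exact h) h2
    · left; funext j; rw [Subsingleton.elim j 0]; exact h
  · rintro (rfl | rfl) <;>
      exact ⟨fun i => by simp, fun h => by simpa using congrFun h 0⟩

lemma countA (w : List α) (n : Fin 1 → ℕ) (hn : ∀ i, 0 < n i)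
    (Γ : (∀ i, ZMod (n i)) → α) :
    count n Γ w = cntI w (fun z : ℤ => Γ fun i => (z : ZMod (n i))) 0 (n 0) := by
  classical
  haveI inst : ∀ i, NeZero (n i) := fun i => ⟨(hn i).ne'⟩
  set f : ℤ → α := fun z : ℤ => Γ fun i => (z : ZMod (n i)) with hf
  have key : ∀ (p : ∀ i, ZMod (n i)) (c : ℤ),
      (fun j => p j + ((c : ℤ) : ZMod (n j)))
        = (fun i => ((((p 0).val : ℤ) + c : ℤ) : ZMod (n i))) := by
    intro p c
    funext i
    have hi : i = 0 := Subsingleton.elim _ _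
    subst hi
    push_cast
    congr 1
    exact (ZMod.natCast_rightInverse (p 0)).symm
  have happ : ∀ (p : ∀ i, ZMod (n i)) (c : ℤ),
      (∀ k : Fin w.length, Γ (fun j => p j + (((k : ℤ) * c : ℤ) : ZMod (n j))) = w.get k)
        ↔ (∀ k : Fin w.length, f (((p 0).val : ℤ) + k * c) = w.get k) := by
    intro p c
    refine forall_congr' fun k => ?_
    rw [key p ((k:ℤ) * c)]
  have happ1 : ∀ (p : ∀ i, ZMod (n i)),
      (∀ k : Fin w.length, Γ (fun j => p j + (((k : ℤ) * (fun _ : Fin 1 => (1:ℤ)) j : ℤ) : ZMod (n j))) = w.get k)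
        ↔ fwd w f (((p 0).val : ℤ)) := by
    intro p
    exact (happ p 1).trans (forall_congr' fun k => by rw [mul_one])
  have happ2 : ∀ (p : ∀ i, ZMod (n i)),
      (∀ k : Fin w.length, Γ (fun j => p j + (((k : ℤ) * (fun _ : Fin 1 => (-1:ℤ)) j : ℤ) : ZMod (n j))) = w.get k)
        ↔ bwd w f (((p 0).val : ℤ)) := by
    intro p
    exact (happ p (-1)).trans (forall_congr' fun k => by rw [mul_neg_one, ← sub_eq_add_neg])
  have hsplit :
      {pv : (∀ i, ZMod (n i)) × (Fin 1 → ℤ) | Appears n Γ w pv.1 pv.2}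
        = ((fun p => (p, fun _ : Fin 1 => (1:ℤ))) '' {p | fwd w f (((p 0).val : ℤ))})
          ∪ ((fun p => (p, fun _ : Fin 1 => (-1:ℤ))) '' {p | bwd w f (((p 0).val : ℤ))}) := by
    ext ⟨p, v⟩
    simp only [Set.mem_setOf_eq, Set.mem_union, Set.mem_image, Prod.mk.injEq]
    constructor
    · rintro ⟨hd, hk⟩
      rcases (hdir1 v).mp hd with rfl | rfl
      · exact Or.inl ⟨p, (happ1 p).mp hk, rfl, rfl⟩
      · exact Or.inr ⟨p, (happ2 p).mp hk, rfl, rfl⟩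
    · rintro (⟨p', hp', rfl, rfl⟩ | ⟨p', hp', rfl, rfl⟩)
      · exact ⟨(hdir1 _).mpr (Or.inl rfl), (happ1 p').mpr hp'⟩
      · exact ⟨(hdir1 _).mpr (Or.inr rfl), (happ2 p').mpr hp'⟩
  have hinj1 : Function.Injective (fun p : ∀ i, ZMod (n i) => (p, fun _ : Fin 1 => (1:ℤ))) := by
    intro a b h; injection h
  have hinj2 : Function.Injective (fun p : ∀ i, ZMod (n i) => (p, fun _ : Fin 1 => (-1:ℤ))) := by
    intro a b h; injection h
  have hdisj : Disjoint
      ((fun p => (p, fun _ : Fin 1 => (1:ℤ))) '' {p : ∀ i, ZMod (n i) | fwd w f (((p 0).val : ℤ))})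
      ((fun p => (p, fun _ : Fin 1 => (-1:ℤ))) '' {p : ∀ i, ZMod (n i) | bwd w f (((p 0).val : ℤ))}) := by
    rw [Set.disjoint_left]
    rintro pv ⟨p1, _, rfl⟩ ⟨p2, _, h⟩
    have := congrFun (congrArg Prod.snd h) 0
    simp at this
  have hcount : count n Γ w
      = Set.ncard {p : ∀ i, ZMod (n i) | fwd w f (((p 0).val : ℤ))}
        + Set.ncard {p : ∀ i, ZMod (n i) | bwd w f (((p 0).val : ℤ))} := by
    rw [count, hsplit, Set.ncard_union_eq hdisj ((Set.toFinite _).image _) ((Set.toFinite _).image _),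
      Set.ncard_image_of_injective _ hinj1, Set.ncard_image_of_injective _ hinj2]
  set E : ℕ → (∀ i, ZMod (n i)) := fun j => fun i => ((j : ℕ) : ZMod (n i)) with hE
  have hEval : ∀ j : ℕ, j < n 0 → (E j 0).val = j := fun j hj => ZMod.val_cast_of_lt hj
  have hEsurj : ∀ p : ∀ i, ZMod (n i), E ((p 0).val) = p := by
    intro p
    funext i
    have hi : i = 0 := Subsingleton.elim _ _
    subst hi
    exact ZMod.natCast_rightInverse (p 0)
  have hgen : ∀ Pr : ℤ → Prop,
      Set.ncard {p : ∀ i, ZMod (n i) | Pr (((p 0).val : ℤ))}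
        = ((Finset.range (n 0)).filter fun j : ℕ => Pr ((j : ℕ) : ℤ)).card := by
    intro Pr
    have hs : {p : ∀ i, ZMod (n i) | Pr (((p 0).val : ℤ))}
        = E '' ↑((Finset.range (n 0)).filter fun j : ℕ => Pr ((j : ℕ) : ℤ)) := by
      ext p
      simp only [Set.mem_setOf_eq, Set.mem_image, Finset.coe_filter, Finset.mem_range,
        Set.mem_setOf_eq]
      constructor
      · intro hp
        exact ⟨(p 0).val, ⟨ZMod.val_lt _, hp⟩, hEsurj p⟩
      · rintro ⟨j, ⟨hj, hPr⟩, rfl⟩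
        simpa [hEval j hj] using hPr
    rw [hs, Set.ncard_image_of_injOn, Set.ncard_coe_finset]
    intro a ha b hb hab
    simp only [Finset.coe_filter, Finset.mem_range, Set.mem_setOf_eq] at ha hb
    rw [← hEval a ha.1, ← hEval b hb.1, hab]
  rw [hcount, hgen, hgen]
  unfold cntI wt
  rw [Finset.sum_add_distrib]
  simp only [zero_add]
  congr 1 <;> rw [Finset.card_filter]

lemma main_ind (w : List α) (hne : w ≠ []) :
    ∀ n : ℕ, 0 < n → ∀ f : ℤ → α, Per f n → (∀ z, f z ∈ w) →
    ∃ m : ℕ, 0 < m ∧ m ≤ w.length ^ (2 * w.length) ∧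
      ∃ g : ℤ → α, Per g m ∧ (∀ z, g z ∈ w) ∧
        (cntI w f 0 n : ℝ) / n ≤ (cntI w g 0 m : ℝ) / m := by
  classical
  intro n
  induction n using Nat.strong_induction_on with
  | _ n IH =>
  intro hn f hper hval
  by_cases hle : n ≤ w.length ^ (2 * w.length)
  · exact ⟨n, hn, hle, f, hper, hval, le_refl _⟩
  push_neg at hle
  set ℓ := w.length with hℓ
  set K := 2 * ℓ with hK
  have hℓpos : 0 < ℓ := List.length_pos_iff.mpr hne
  -- pigeonhole: two equal windows of length K
  set Wm : ℕ → (Fin K → Fin ℓ) :=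
    fun p i => ⟨w.idxOf (f ((p:ℤ) + i)), List.idxOf_lt_length_iff.mpr (hval _)⟩ with hWm
  have hcard : (Finset.univ : Finset (Fin K → Fin ℓ)).card < (Finset.range n).card := by
    rw [Finset.card_range, Finset.card_univ, Fintype.card_fun, Fintype.card_fin, Fintype.card_fin]
    exact hle
  obtain ⟨p, hp, q, hq, hpq, hW⟩ :=
    Finset.exists_ne_map_eq_of_card_lt_of_maps_to hcard (fun a _ => Finset.mem_univ (Wm a))
  have hwin : ∀ p q : ℕ, Wm p = Wm q → ∀ i : ℕ, i < K → f ((p:ℤ) + i) = f ((q:ℤ) + i) := by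
    intro p q hW i hi
    have h2 : w.idxOf (f ((p:ℤ)+i)) = w.idxOf (f ((q:ℤ)+i)) :=
      congrArg Fin.val (congrFun hW ⟨i, hi⟩)
    have e1 := List.idxOf_get (List.idxOf_lt_length_iff.mpr (hval ((p:ℤ)+i)))
    have e2 := List.idxOf_get (List.idxOf_lt_length_iff.mpr (hval ((q:ℤ)+i)))
    rw [← e1, ← e2]
    congr 1
    exact Fin.ext h2
  -- reduce to the case p < q
  have key : ∀ p q : ℕ, p < q → q < n → (∀ i : ℕ, i < K → f ((p:ℤ) + i) = f ((q:ℤ) + i)) →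
      ∃ m : ℕ, 0 < m ∧ m ≤ w.length ^ (2 * w.length) ∧
        ∃ g : ℤ → α, Per g m ∧ (∀ z, g z ∈ w) ∧
          (cntI w f 0 n : ℝ) / n ≤ (cntI w g 0 m : ℝ) / m := by
    intro p q hpq hqn hwin
    set n1 : ℕ := q - p with hn1
    set n2 : ℕ := n - n1 with hn2
    have hn1pos : 0 < n1 := by omega
    have hn2pos : 0 < n2 := by omega
    have hn12 : n1 + n2 = n := by omega
    have hn1lt : n1 < n := by omega
    have hn2lt : n2 < n := by omega
    set P : ℤ := (p : ℤ) with hP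
    set Q : ℤ := (q : ℤ) with hQdef
    have hQ : Q = P + n1 := by omega
    -- the two spliced sequences
    set f1 : ℤ → α := fun z => f (P + (z - P) % (n1:ℤ)) with hf1
    set f2 : ℤ → α := fun z => f (Q + (z - Q) % (n2:ℤ)) with hf2
    have per1 : Per f1 n1 := by
      intro z
      simp only [hf1]
      congr 2
      rw [show z + (n1:ℤ) - P = (z - P) + (n1:ℤ) * 1 by ring, Int.add_mul_emod_self_left]
    have per2 : Per f2 n2 := by
      intro z
      simp only [hf2]
      congr 2
      rw [show z + (n2:ℤ) - Q = (z - Q) + (n2:ℤ) * 1 by ring, Int.add_mul_emod_self_left]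
    have val1 : ∀ z, f1 z ∈ w := fun z => hval _
    have val2 : ∀ z, f2 z ∈ w := fun z => hval _
    have hagree1 : ∀ z : ℤ, P ≤ z → z < P + n1 + K → f1 z = f z := by
      refine agree_extend hn1pos per1 K (fun z h1 h2 => ?_) (fun z h1 h2 => ?_)
      · simp only [hf1]
        rw [Int.emod_eq_of_lt (by omega) (by omega)]
        congr 1; ring
      · have hi : (z - Q).toNat < K := by omega
        have := hwin (z - Q).toNat hi
        rw [show (p:ℤ) + ((z - Q).toNat : ℤ) = z - n1 by omega,
          show (q:ℤ) + ((z - Q).toNat : ℤ) = z by omega] at this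
        exact this.symm
    have hagree2 : ∀ z : ℤ, Q ≤ z → z < Q + n2 + K → f2 z = f z := by
      refine agree_extend hn2pos per2 K (fun z h1 h2 => ?_) (fun z h1 h2 => ?_)
      · simp only [hf2]
        rw [Int.emod_eq_of_lt (by omega) (by omega)]
        congr 1; ring
      · have hzn : f z = f (z - n) := by
          rw [show z = (z - n) + (n:ℤ) by ring]
          rw [hper (z - n)]
          ring_nf
        have hi : (z - n - P).toNat < K := by omega
        have h2' := hwin (z - n - P).toNat hi
        rw [show (p:ℤ) + ((z - n - P).toNat : ℤ) = z - n by omega,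
          show (q:ℤ) + ((z - n - P).toNat : ℤ) = z - n2 by omega] at h2'
        rw [hzn, h2']
    -- counting
    set a : ℤ := P + ℓ - 1 with ha
    have c1eq : cntI w f1 a n1 = cntI w f a n1 := by
      refine Finset.sum_congr rfl fun j hj => ?_
      have hj' := Finset.mem_range.mp hj
      refine wt_eq_of_agree fun y hy1 hy2 => ?_
      exact hagree1 y (by omega) (by omega)
    have c2eq : cntI w f2 (a + n1) n2 = cntI w f (a + n1) n2 := by
      refine Finset.sum_congr rfl fun j hj => ?_
      have hj' := Finset.mem_range.mp hj
      refine wt_eq_of_agree fun y hy1 hy2 => ?_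
      exact hagree2 y (by omega) (by omega)
    have hsplitsum : cntI w f a n = cntI w f a n1 + cntI w f (a + n1) n2 := by
      unfold cntI
      rw [← hn12, sum_range_split]
      congr 1
      refine Finset.sum_congr rfl fun j _ => ?_
      congr 1
      push_cast
      ring
    have total : cntI w f 0 n = cntI w f1 0 n1 + cntI w f2 0 n2 := by
      rw [cnt_trans hper 0 a, hsplitsum, cnt_trans per1 0 a, cnt_trans per2 0 (a + n1),
        c1eq, c2eq]
    obtain ⟨m1, hm1, hm1le, g1, pg1, vg1, hle1⟩ := IH n1 hn1lt hn1pos f1 per1 val1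
    obtain ⟨m2, hm2, hm2le, g2, pg2, vg2, hle2⟩ := IH n2 hn2lt hn2pos f2 per2 val2
    have hn1R : (0:ℝ) < (n1:ℝ) := by exact_mod_cast hn1pos
    have hn2R : (0:ℝ) < (n2:ℝ) := by exact_mod_cast hn2pos
    have hmed : (cntI w f 0 n : ℝ) / n
        ≤ max ((cntI w f1 0 n1 : ℝ) / n1) ((cntI w f2 0 n2 : ℝ) / n2) := by
      rw [total]
      rcases le_total ((cntI w f1 0 n1 : ℝ) / n1) ((cntI w f2 0 n2 : ℝ) / n2) with hc | hc
      · refine le_trans ?_ (le_max_right _ _)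
        rw [show ((n:ℕ):ℝ) = (n1:ℝ) + (n2:ℝ) by rw [← hn12]; push_cast; ring]
        push_cast
        exact med hn1R hn2R hc
      · refine le_trans ?_ (le_max_left _ _)
        rw [show ((n:ℕ):ℝ) = (n1:ℝ) + (n2:ℝ) by rw [← hn12]; push_cast; ring]
        push_cast
        rw [add_comm ((cntI w f1 0 n1 : ℕ):ℝ), add_comm (n1:ℝ)]
        exact med hn2R hn1R hc
    rcases le_total ((cntI w f1 0 n1 : ℝ) / n1) ((cntI w f2 0 n2 : ℝ) / n2) with hc | hc
    · exact ⟨m2, hm2, hm2le, g2, pg2, vg2, le_trans (le_trans hmed (by rw [max_eq_right hc])) hle2⟩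
    · exact ⟨m1, hm1, hm1le, g1, pg1, vg1, le_trans (le_trans hmed (by rw [max_eq_left hc])) hle1⟩
  rcases lt_trichotomy p q with h | h | h
  · exact key p q h (Finset.mem_range.mp hq) (hwin p q hW)
  · exact absurd h hpq
  · exact key q p h (Finset.mem_range.mp hp) (hwin q p hW.symm)

noncomputable def dec (w : List α) (m : ℕ) (g : Fin (m+1) → Fin w.length) : ℤ → α :=
  fun z => w.get (g ⟨(z : ZMod (m+1)).val, ZMod.val_lt _⟩)

lemma dec_per (w : List α) (m : ℕ) (g : Fin (m+1) → Fin w.length) :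
    Per (dec w m g) (m+1) := by
  intro z
  unfold dec
  have h : ((z + ((m+1 : ℕ) : ℤ) : ℤ) : ZMod (m+1)) = (z : ZMod (m+1)) := by
    push_cast
    simp
  simp only [h]

lemma dec_mem (w : List α) (m : ℕ) (g : Fin (m+1) → Fin w.length) :
    ∀ z, dec w m g z ∈ w := fun _ => List.get_mem _ _

lemma dec_enc [DecidableEq α] (w : List α) (m : ℕ) (g' : ℤ → α) (hper : Per g' (m+1))
    (hval : ∀ z, g' z ∈ w) :
    dec w m (fun j => ⟨w.idxOf (g' ((j : ℕ) : ℤ)),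
      List.idxOf_lt_length_iff.mpr (hval _)⟩) = g' := by
  funext z
  unfold dec
  rw [List.idxOf_get (List.idxOf_lt_length_iff.mpr (hval _))]
  rw [show ((((z : ZMod (m+1))).val : ℕ) : ℤ) = z % ((m+1 : ℕ) : ℤ) from ZMod.val_intCast z]
  exact (per_emod hper z).symm


theorem statement13 (w : List α) (hw : TwoLetters w) :
    ∃ (n : Fin 1 → ℕ) (Γ : (∀ i, ZMod (n i)) → α),
      (∀ i, 0 < n i) ∧ conc n Γ w = C 1 w := by
  classical
  obtain ⟨x0, hx0, y0, hy0, hxy⟩ := hw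
  have hne : w ≠ [] := by rintro rfl; simp at hx0
  have hℓpos : 0 < w.length := List.length_pos_iff.mpr hne
  set N := w.length ^ (2 * w.length) with hN
  have hN1 : 1 ≤ N := Nat.one_le_pow _ _ hℓpos
  set S : Set ℝ := {x : ℝ | ∃ (n : Fin 1 → ℕ) (Γ : (∀ i, ZMod (n i)) → α),
    (∀ i, 0 < n i) ∧ x = conc n Γ w} with hS
  set S2 : Set ℝ := {x : ℝ | ∃ m : ℕ, 0 < m ∧ m ≤ N ∧ ∃ g : ℤ → α,
    Per g m ∧ (∀ z, g z ∈ w) ∧ x = (cntI w g 0 m : ℝ)/m} with hS2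
  -- S2 is finite
  have hfin : S2.Finite := by
    have hsub : S2 ⊆ Set.range (fun x : (Σ m' : Fin N, (Fin ((m' : ℕ)+1) → Fin w.length)) =>
        ((cntI w (dec w (x.1 : ℕ) x.2) 0 ((x.1 : ℕ)+1) : ℕ) : ℝ)/((((x.1 : ℕ)+1 : ℕ)) : ℝ)) := by
      rintro x ⟨m, hm0, hmN, g, pg, vg, rfl⟩
      obtain ⟨m', rfl⟩ : ∃ m'', m = m'' + 1 := ⟨m-1, by omega⟩
      refine ⟨⟨⟨m', by omega⟩, fun j => ⟨w.idxOf (g ((j : ℕ) : ℤ)),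
        List.idxOf_lt_length_iff.mpr (vg _)⟩⟩, ?_⟩
      simp only
      rw [dec_enc w m' g pg vg]
    exact (Set.finite_range _).subset hsub
  have hne2 : S2.Nonempty := by
    refine ⟨(cntI w (fun _ => x0) 0 1 : ℝ)/((1:ℕ):ℝ), 1, one_pos, hN1, fun _ => x0, fun z => rfl,
      fun z => hx0, rfl⟩
  obtain ⟨b, hbS2, hb⟩ := Set.exists_max_image S2 id hfin hne2
  -- S2 ⊆ S
  have hsub : S2 ⊆ S := by
    rintro x ⟨m, hm0, hmN, g, pg, vg, rfl⟩
    haveI : NeZero m := ⟨hm0.ne'⟩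
    refine ⟨fun _ => m, fun pp => g (((pp 0).val : ℕ) : ℤ), fun i => hm0, ?_⟩
    rw [conc, countA w (fun _ => m) (fun i => hm0)]
    have hfeq : (fun z : ℤ => g ((((z : ZMod m)).val : ℕ) : ℤ)) = g := by
      funext z
      rw [show ((((z : ZMod m)).val : ℕ) : ℤ) = z % (m : ℤ) from ZMod.val_intCast z,
        ← per_emod pg]
    have hprod : (∏ _i : Fin 1, m) = m := by simp
    rw [hfeq, hprod]
  -- every element of S is bounded by b
  have hub : ∀ y ∈ S, y ≤ b := by
    rintro y ⟨n, Γ, hn, rfl⟩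
    haveI inst : ∀ i, NeZero (n i) := fun i => ⟨(hn i).ne'⟩
    set f : ℤ → α := fun z => Γ (fun i => (z : ZMod (n i))) with hfdef
    have hperf : Per f (n 0) := by
      intro z
      simp only [hfdef]
      congr 1
      funext i
      have hi : i = 0 := Subsingleton.elim _ _
      subst hi
      push_cast
      simp
    set f' : ℤ → α := fun z => if f z ∈ w then f z else x0 with hf'
    have hperf' : Per f' (n 0) := fun z => by simp only [hf', hperf z]
    have hvalf' : ∀ z, f' z ∈ w := fun z => by
      by_cases h : f z ∈ w <;> simp [hf', h, hx0]
    have hwtle : ∀ j, wt w f j ≤ wt w f' j := by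
      intro j
      unfold wt
      refine add_le_add ?_ ?_
      · by_cases h : fwd w f j
        · have hfwd' : fwd w f' j := by
            intro k
            simp only [hf']
            rw [h k, if_pos (List.get_mem _ _)]
          rw [if_pos h, if_pos hfwd']
        · rw [if_neg h]; exact Nat.zero_le _
      · by_cases h : bwd w f j
        · have hbwd' : bwd w f' j := by
            intro k
            simp only [hf']
            rw [h k, if_pos (List.get_mem _ _)]
          rw [if_pos h, if_pos hbwd']
        · rw [if_neg h]; exact Nat.zero_le _
    have hn0R : (0:ℝ) < ((n 0 : ℕ) : ℝ) := by exact_mod_cast hn 0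
    have hconc : conc n Γ w = (cntI w f 0 (n 0) : ℝ) / ((n 0 : ℕ) : ℝ) := by
      rw [conc, countA w n hn Γ]
      congr 2
      simp
    have h1 : conc n Γ w ≤ (cntI w f' 0 (n 0) : ℝ)/((n 0 : ℕ) : ℝ) := by
      rw [hconc]
      gcongr
      exact_mod_cast cnt_mono 0 (n 0) hwtle
    obtain ⟨m, hm0, hmN, g, pg, vg, hle⟩ := main_ind w hne (n 0) (hn 0) f' hperf' hvalf'
    have hmem : (cntI w g 0 m : ℝ)/m ∈ S2 := ⟨m, hm0, hmN, g, pg, vg, rfl⟩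
    exact le_trans (le_trans h1 hle) (hb _ hmem)
  have hbS : b ∈ S := hsub hbS2
  have hCS : C 1 w = sSup S := rfl
  have hsup : C 1 w = b := by
    rw [hCS]
    apply le_antisymm
    · exact csSup_le ⟨b, hbS⟩ hub
    · exact le_csSup ⟨b, hub⟩ hbS
  obtain ⟨n, Γ, hn, hbc⟩ := hbS
  exact ⟨n, Γ, hn, by rw [hsup]; exact hbc.symm⟩


end Aux

end WordGrid
end

section
/- Let A and B be distinct letters. Then C_2(A B) = 3; equivalently, every two-dimensional grid Γ satisfies c_2(A B, Γ) ≤ 3, and this value is attained in the supremum defining C_2(A B). -/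
/-!
Read `A B` in direction `u` as a transition from `A` to `B` along `u`. For a fixed `u`, the three
conditions "`(Γ p, Γ (p + u))` is `(A, B)`", "it is `(B, A)`" and "the indicator of `A` takes
equal values at `p` and `p + u`" are mutually exclusive, and the `(B, A)` positions are the
transitions along `-u` shifted by `u`. Summing over the four lines `±e₁, ±e₂, ±(e₁ + e₂),
±(e₂ - e₁)` bounds the count by `4|Γ|` minus the agreements of the indicator along these
directions. In each triangle `p, p + e₁, p + e₂` two of the three indicator values agree, so the
agreements along `e₁, e₂, e₂ - e₁` already number at least `|Γ|`; hence the count is at most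
`3|Γ|`. Alternating rows of `A` and `B` attain the bound: each `A` starts the word in the six
directions that change the row.
-/

open scoped BigOperators

namespace WordGrid

variable {α : Type*}

open Finset

section TranslationCounting

variable {G : Type*} [AddCommGroup G] [Fintype G]

open scoped Classical in
noncomputable def transitions (Γ : G → α) (A B : α) (u : G) : ℕ :=
  #{p | Γ p = A ∧ Γ (p + u) = B}

open scoped Classical in
noncomputable def agreements (f : G → Prop) (u : G) : ℕ :=
  #{p | f p ↔ f (p + u)}

theorem card_filter_add_right (Q : G → Prop) [DecidablePred Q] (u : G) :
    #{p | Q (p + u)} = #{p | Q p} := by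
  simp only [card_filter]
  exact Fintype.sum_equiv (Equiv.addRight u) _ _ fun _ => rfl

theorem card_le_agreements_add_agreements_add_agreements_sub (f : G → Prop) (a b : G) :
    Fintype.card G ≤ agreements f a + agreements f b + agreements f (b - a) := by
  classical
  rw [agreements, agreements, agreements,
    ← card_filter_add_right (fun p => f p ↔ f (p + (b - a))) a]
  simp only [add_add_sub_cancel, card_filter, ← sum_add_distrib]
  rw [← card_univ, card_eq_sum_ones]
  refine sum_le_sum fun p _ => ?_
  by_cases hp : f p <;> by_cases ha : f (p + a) <;> by_cases hb : f (p + b) <;> simp [hp, ha, hb]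

theorem transitions_add_transitions_neg_add_agreements_le (Γ : G → α) {A B : α} (hAB : A ≠ B)
    (u : G) :
    transitions Γ A B u + transitions Γ A B (-u) + agreements (Γ · = A) u ≤ Fintype.card G := by
  classical
  rw [transitions, transitions, agreements,
    ← card_filter_add_right (fun p => Γ p = A ∧ Γ (p + -u) = B) u]
  simp only [add_neg_cancel_right, card_filter, ← sum_add_distrib]
  rw [← card_univ, card_eq_sum_ones]
  refine sum_le_sum fun p _ => ?_
  split_ifs <;> grind

end TranslationCounting

def reduceMod {d : ℕ} (n : Fin d → ℕ) : (Fin d → ℤ) →+ ∀ i, ZMod (n i) :=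
  AddMonoidHom.pi fun i => (Int.castAddHom (ZMod (n i))).comp (Pi.evalAddMonoidHom _ i)

@[simp]
theorem reduceMod_apply {d : ℕ} (n : Fin d → ℕ) (v : Fin d → ℤ) (i : Fin d) :
    reduceMod n v i = (v i : ZMod (n i)) := rfl

def dirs (d : ℕ) : Finset (Fin d → ℤ) :=
  (Fintype.piFinset fun _ => {-1, 0, 1}).erase 0

theorem isDir_iff_mem_dirs {d : ℕ} {v : Fin d → ℤ} : IsDir d v ↔ v ∈ dirs d := by
  simp [IsDir, dirs, and_comm]

theorem appears_pair_iff {d : ℕ} (n : Fin d → ℕ) (Γ : (∀ i, ZMod (n i)) → α) (A B : α)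
    (p : ∀ i, ZMod (n i)) (v : Fin d → ℤ) :
    Appears n Γ [A, B] p v ↔ IsDir d v ∧ Γ p = A ∧ Γ (p + reduceMod n v) = B := by
  simp [Appears, Fin.forall_fin_two, Pi.add_def]

theorem count_pair_eq_sum_transitions {d : ℕ} (n : Fin d → ℕ) [∀ i, NeZero (n i)]
    (Γ : (∀ i, ZMod (n i)) → α) (A B : α) :
    count n Γ [A, B] = ∑ v ∈ dirs d, transitions Γ A B (reduceMod n v) := by
  classical
  have hset : {pv : (∀ i, ZMod (n i)) × (Fin d → ℤ) | Appears n Γ [A, B] pv.1 pv.2} =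
      ↑({pv ∈ (univ : Finset (∀ i, ZMod (n i))) ×ˢ dirs d |
        Γ pv.1 = A ∧ Γ (pv.1 + reduceMod n pv.2) = B}) := by
    ext ⟨p, v⟩
    simp [appears_pair_iff, isDir_iff_mem_dirs]
  rw [count, hset, Set.ncard_coe_finset, card_filter, sum_product_right]
  simp only [transitions, card_filter]

def halfDirs : Finset (Fin 2 → ℤ) := {![1, 0], ![0, 1], ![1, 1], ![-1, 1]}

theorem dirs_two : dirs 2 = halfDirs ∪ halfDirs.map (Equiv.neg _).toEmbedding := by
  decide

theorem sum_dirs_two {M : Type*} [AddCommMonoid M] (g : (Fin 2 → ℤ) → M) :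
    ∑ v ∈ dirs 2, g v = ∑ u ∈ halfDirs, (g u + g (-u)) := by
  rw [dirs_two, sum_union (by decide), sum_map, sum_add_distrib]
  rfl

theorem sum_halfDirs {M : Type*} [AddCommMonoid M] (g : (Fin 2 → ℤ) → M) :
    ∑ u ∈ halfDirs, g u = g ![1, 0] + g ![0, 1] + g ![1, 1] + g ![-1, 1] := by
  simp [halfDirs, add_assoc]

theorem count_pair_le_three_mul_card (n : Fin 2 → ℕ) [∀ i, NeZero (n i)]
    (Γ : (∀ i, ZMod (n i)) → α) {A B : α} (hAB : A ≠ B) :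
    count n Γ [A, B] ≤ 3 * Fintype.card (∀ i, ZMod (n i)) := by
  set N := Fintype.card (∀ i, ZMod (n i))
  let agree (u : Fin 2 → ℤ) := agreements (Γ · = A) (reduceMod n u)
  have hpair (u : Fin 2 → ℤ) : transitions Γ A B (reduceMod n u) +
      transitions Γ A B (reduceMod n (-u)) + agree u ≤ N := by
    simpa only [agree, map_neg] using
      transitions_add_transitions_neg_add_agreements_le Γ hAB (reduceMod n u)
  have htriangle : N ≤ agree ![1, 0] + agree ![0, 1] + agree ![-1, 1] := by
    have := card_le_agreements_add_agreements_add_agreements_sub (Γ · = A)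
      (reduceMod n ![1, 0]) (reduceMod n ![0, 1])
    rwa [← map_sub, show ![(0 : ℤ), 1] - ![1, 0] = ![-1, 1] by decide] at this
  have hsum : count n Γ [A, B] + ∑ u ∈ halfDirs, agree u ≤ 4 * N := by
    rw [count_pair_eq_sum_transitions, sum_dirs_two, ← sum_add_distrib]
    exact (sum_le_sum fun u _ => hpair u).trans (by simp [halfDirs])
  rw [sum_halfDirs] at hsum
  omega

theorem conc_pair_le_three {n : Fin 2 → ℕ} (hn : ∀ i, 0 < n i) (Γ : (∀ i, ZMod (n i)) → α)
    {A B : α} (hAB : A ≠ B) : conc n Γ [A, B] ≤ 3 := by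
  have : ∀ i, NeZero (n i) := fun i => ⟨(hn i).ne'⟩
  have hcard : Fintype.card (∀ i, ZMod (n i)) = ∏ i, n i := by simp [Fintype.card_pi]
  have hpos : (0 : ℝ) < ((∏ i, n i : ℕ) : ℝ) := by exact_mod_cast prod_pos fun i _ => hn i
  rw [conc, div_le_iff₀ hpos]
  exact_mod_cast hcard ▸ count_pair_le_three_mul_card n Γ hAB

theorem conc_stripes {A B : α} (hAB : A ≠ B) :
    conc (fun _ => 2) (fun p : Fin 2 → ZMod 2 => if p 0 = 0 then A else B) [A, B] = 3 := by
  classical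
  have hcount :
      count (fun _ => 2) (fun p : Fin 2 → ZMod 2 => if p 0 = 0 then A else B) [A, B] = 12 := by
    rw [count_pair_eq_sum_transitions]
    simp only [transitions, ite_eq_left_iff, ite_eq_right_iff, hAB.symm, hAB, imp_false,
      not_not]
    decide
  rw [conc, hcount]
  norm_num

theorem statement15 (A B : α) (hAB : A ≠ B) :
    C 2 [A, B] = 3 ∧
      ∃ (n : Fin 2 → ℕ) (Γ : (∀ i, ZMod (n i)) → α),
        (∀ i, 0 < n i) ∧ conc n Γ [A, B] = 3 := by
  have hstripes := conc_stripes hAB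
  refine ⟨IsGreatest.csSup_eq ⟨⟨_, _, fun _ => two_pos, hstripes.symm⟩, ?_⟩,
    _, _, fun _ => two_pos, hstripes⟩
  rintro _ ⟨n, Γ, hn, rfl⟩
  exact conc_pair_le_three hn Γ hAB

end WordGrid
end

section
/- Let d be a positive integer, let f : (ℤ/3ℤ)^d → [0,1] be any function, and let α = 𝔼_x f(x) be its average (expectation over uniform x ∈ (ℤ/3ℤ)^d). Then 𝔼_{x,y} [ f(x)·(1 − f(x+y))·(1 − f(x+2y)) ] ≤ (3/2)·α·(1 − α)², where the expectation is over independent uniform x, y ∈ (ℤ/3ℤ)^d. -/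
open scoped BigOperators

namespace WordGrid

variable {α : Type*}

noncomputable def ω : ℂ := ⟨-1/2, Real.sqrt 3 / 2⟩
lemma sqrt3_sq : Real.sqrt 3 ^ 2 = 3 := Real.sq_sqrt (by norm_num)
lemma ω_mul_ω : ω * ω = ⟨-1/2, -(Real.sqrt 3/2)⟩ := by
  apply Complex.ext <;> simp [ω, Complex.mul_re, Complex.mul_im] <;> nlinarith [sqrt3_sq]
lemma hω3 : ω ^ 3 = 1 := by
  have h : ω ^ 3 = (ω * ω) * ω := by ring
  rw [h, ω_mul_ω]
  apply Complex.ext <;> simp [ω, Complex.mul_re, Complex.mul_im] <;> nlinarith [sqrt3_sq]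
lemma hω_sum : 1 + ω + ω^2 = 0 := by
  have h : ω^2 = ω * ω := by ring
  rw [h, ω_mul_ω]
  apply Complex.ext <;> simp [ω, Complex.mul_re, Complex.mul_im] <;> norm_num
lemma ω_ne_one : ω ≠ 1 := by
  intro h
  have := congrArg Complex.im h
  simp [ω] at this
lemma ω2_ne_one : ω^2 ≠ 1 := by
  intro h
  have h2 : ω^2 = ω * ω := by ring
  rw [h2, ω_mul_ω] at h
  have := congrArg Complex.im h
  simp at this
lemma conj_ω : (starRingEnd ℂ) ω = ω^2 := by
  have h2 : ω^2 = ω * ω := by ring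
  rw [h2, ω_mul_ω]
  apply Complex.ext <;> simp [ω]

noncomputable def cc (v : ZMod 3) : ℂ := ω ^ v.val

lemma ωpow_mod (m : ℕ) : ω ^ (m % 3) = ω ^ m := by
  conv_rhs => rw [← Nat.div_add_mod m 3]
  rw [pow_add, pow_mul, hω3, one_pow, one_mul]

lemma cc_add (a b : ZMod 3) : cc (a + b) = cc a * cc b := by
  unfold cc
  rw [ZMod.val_add, ωpow_mod, pow_add]

lemma cc_zero : cc 0 = 1 := by simp [cc]

lemma cc_one : cc 1 = ω := by
  have : (1 : ZMod 3).val = 1 := rfl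
  simp [cc, this]

lemma cc_two : cc 2 = ω^2 := by
  have : (2 : ZMod 3).val = 2 := rfl
  simp [cc, this]

lemma zmod3_univ : (Finset.univ : Finset (ZMod 3)) = {0, 1, 2} := by decide

lemma sum_zmod3 {M : Type*} [AddCommMonoid M] (h : ZMod 3 → M) :
    ∑ v, h v = h 0 + h 1 + h 2 := by
  rw [zmod3_univ]
  rw [Finset.sum_insert (by decide), Finset.sum_insert (by decide), Finset.sum_singleton, add_assoc]

lemma cc_sum : ∑ v : ZMod 3, cc v = 0 := by
  rw [sum_zmod3, cc_zero, cc_one, cc_two, hω_sum]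

lemma cc_ne_one {v : ZMod 3} (hv : v ≠ 0) : cc v ≠ 1 := by
  have : v = 1 ∨ v = 2 := by revert hv; revert v; decide
  rcases this with h | h <;> subst h
  · rw [cc_one]; exact ω_ne_one
  · rw [cc_two]; exact ω2_ne_one

lemma conj_cc (v : ZMod 3) : (starRingEnd ℂ) (cc v) = cc (-v) := by
  have : v = 0 ∨ v = 1 ∨ v = 2 := by revert v; decide
  rcases this with h | h | h <;> subst h
  · simp [cc_zero]
  · have h1 : (-1 : ZMod 3) = 2 := by decide
    rw [cc_one, h1, cc_two, conj_ω]
  · have h1 : (-2 : ZMod 3) = 1 := by decide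
    rw [cc_two, h1, cc_one, map_pow, conj_ω]
    rw [← pow_mul]
    have : ω ^ 4 = ω ^ 3 * ω := by ring
    rw [this, hω3, one_mul]

variable {d : ℕ}

def ip (t x : Fin d → ZMod 3) : ZMod 3 := ∑ i, t i * x i

lemma ip_comm (t x : Fin d → ZMod 3) : ip t x = ip x t := by
  simp [ip, mul_comm]

lemma ip_add (t x y : Fin d → ZMod 3) : ip t (x + y) = ip t x + ip t y := by
  simp [ip, mul_add, Finset.sum_add_distrib]

lemma ip_add' (t s x : Fin d → ZMod 3) : ip (t + s) x = ip t x + ip s x := by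
  rw [ip_comm, ip_add, ip_comm x t, ip_comm x s]

lemma ip_zero (t : Fin d → ZMod 3) : ip t 0 = 0 := by simp [ip]

lemma ip_neg (t x : Fin d → ZMod 3) : ip t (-x) = - ip t x := by
  simp [ip, Finset.sum_neg_distrib]

lemma ip_sub (t x y : Fin d → ZMod 3) : ip t (x - y) = ip t x - ip t y := by
  rw [sub_eq_add_neg, ip_add, ip_neg, sub_eq_add_neg]

lemma ip_single (i : Fin d) (u : Fin d → ZMod 3) : ip (Pi.single i 1) u = u i := by
  simp [ip, Pi.single_apply, ite_mul]

lemma sum_cc_ip {u : Fin d → ZMod 3} (hu : u ≠ 0) :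
    ∑ t : Fin d → ZMod 3, cc (ip t u) = 0 := by
  obtain ⟨i, hi⟩ : ∃ i, u i ≠ 0 := by
    by_contra h; push_neg at h; exact hu (funext h)
  set e : Fin d → ZMod 3 := Pi.single i 1 with he
  have key : ∑ t : Fin d → ZMod 3, cc (ip t u)
      = ∑ t : Fin d → ZMod 3, cc (ip (t + e) u) :=
    (Fintype.sum_bijective (· + e) (Equiv.addRight e).bijective _ _ (fun t => rfl)).symm
  have h2 : ∀ t : Fin d → ZMod 3, cc (ip (t + e) u) = cc (ip t u) * cc (u i) := by
    intro t
    rw [ip_add', cc_add, he, ip_single]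
  rw [Finset.sum_congr rfl (fun t _ => h2 t), ← Finset.sum_mul] at key
  have hne := cc_ne_one hi
  have hzero : (∑ t : Fin d → ZMod 3, cc (ip t u)) * (1 - cc (u i)) = 0 := by
    rw [mul_sub, mul_one]
    linear_combination key
  rcases mul_eq_zero.mp hzero with h | h
  · exact h
  · exact absurd (by linear_combination -h : cc (u i) = 1) hne

lemma sum_cc_ip_eq (u : Fin d → ZMod 3) :
    ∑ t : Fin d → ZMod 3, cc (ip t u) = if u = 0 then ((3:ℂ)^d) else 0 := by
  by_cases h : u = 0
  · subst h
    simp only [ip_zero, cc_zero, Finset.sum_const, Finset.card_univ, nsmul_eq_mul, mul_one]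
    simp [Fintype.card_pi]
  · rw [if_neg h, sum_cc_ip h]

lemma schur {A B C : ℝ} (hA : 0 ≤ A) (hB : 0 ≤ B) (hC : 0 ≤ C) :
    A^2*B + A^2*C + B^2*A + B^2*C + C^2*A + C^2*B ≤ A^3+B^3+C^3+3*(A*B*C) := by
  rcases le_total A B with h1 | h1 <;> rcases le_total B C with h2 | h2 <;>
    rcases le_total A C with h3 | h3 <;>
    nlinarith [mul_nonneg hA hB, mul_nonneg hB hC, mul_nonneg hA hC,
      sq_nonneg (A-B), sq_nonneg (B-C), sq_nonneg (A-C),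
      mul_nonneg (mul_nonneg hA hB) hC]

lemma re_cube {A B C : ℝ} (hA : 0 ≤ A) (hB : 0 ≤ B) (hC : 0 ≤ C) :
    -((A+B+C)/2 * Complex.normSq ((A:ℂ) + (B:ℂ)*ω + (C:ℂ)*ω^2))
      ≤ (( (A:ℂ) + (B:ℂ)*ω + (C:ℂ)*ω^2 )^3).re := by
  set z : ℂ := (A:ℂ) + (B:ℂ)*ω + (C:ℂ)*ω^2 with hz
  have h2 : ω^2 = ω*ω := by ring
  have hre : z.re = A - B/2 - C/2 := by
    rw [hz, h2, ω_mul_ω]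
    simp [ω, Complex.add_re, Complex.mul_re]
    ring
  have him : z.im = (B - C) * (Real.sqrt 3 / 2) := by
    rw [hz, h2, ω_mul_ω]
    simp [ω, Complex.add_im, Complex.mul_im]
    ring
  have him2 : z.im ^ 2 = (B - C)^2 * 3 / 4 := by
    rw [him, mul_pow]
    have : (Real.sqrt 3 / 2)^2 = 3/4 := by
      rw [div_pow, sqrt3_sq]; norm_num
    rw [this]; ring
  have h3 : (z^3).re = z.re^3 - 3*z.re*z.im^2 := by
    have : z^3 = z*z*z := by ring
    rw [this]
    simp [Complex.mul_re, Complex.mul_im]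
    ring
  rw [Complex.normSq_apply, h3, hre]
  have hsq : z.im * z.im = (B - C)^2 * 3 / 4 := by rw [← pow_two]; exact him2
  rw [hsq, him2]
  nlinarith [schur hA hB hC]


theorem statement19 (d : ℕ) (hd : 0 < d) (f : (Fin d → ZMod 3) → ℝ)
    (hf : ∀ x, f x ∈ Set.Icc (0 : ℝ) 1) (avg : ℝ)
    (havg : avg = (∑ x : Fin d → ZMod 3, f x) / (3 : ℝ) ^ d) :
    (∑ x : Fin d → ZMod 3, ∑ y : Fin d → ZMod 3,
        f x * (1 - f (x + y)) * (1 - f (x + y + y))) / ((3 : ℝ) ^ d * (3 : ℝ) ^ d)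
      ≤ 3 / 2 * avg * (1 - avg) ^ 2 := by
  classical
  have hN : (0:ℝ) < (3:ℝ)^d := by positivity
  set g : (Fin d → ZMod 3) → ℝ := fun a => 1 - f a with hg
  have hg0 : ∀ a, 0 ≤ g a := fun a => by have := (hf a).2; simp only [hg]; linarith
  have hg1 : ∀ a, g a ≤ 1 := fun a => by have := (hf a).1; simp only [hg]; linarith
  set sf : ℝ := ∑ a : Fin d → ZMod 3, f a with hsf
  set sg : ℝ := ∑ a : Fin d → ZMod 3, g a with hsg
  have hcard : (Fintype.card (Fin d → ZMod 3) : ℝ) = (3:ℝ)^d := by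
    simp [Fintype.card_pi]
  have hsfg : sf + sg = (3:ℝ)^d := by
    rw [hsf, hsg, ← Finset.sum_add_distrib]
    have : ∀ a : Fin d → ZMod 3, f a + g a = 1 := fun a => by simp [hg]
    rw [Finset.sum_congr rfl fun a _ => this a]
    simp [Finset.card_univ, hcard]
  set Fh : (Fin d → ZMod 3) → ℂ := fun t => ∑ a : Fin d → ZMod 3, (f a : ℂ) * cc (ip t a) with hFh
  set Gh : (Fin d → ZMod 3) → ℂ := fun t => ∑ a : Fin d → ZMod 3, (g a : ℂ) * cc (ip t a) with hGh
  have hip0 : ∀ a : Fin d → ZMod 3, ip (0 : Fin d → ZMod 3) a = 0 := fun a => by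
    rw [ip_comm]; exact ip_zero a
  have hGh0 : Gh 0 = (sg : ℂ) := by
    rw [hGh]
    simp only [hip0, cc_zero, mul_one]
    rw [hsg]; push_cast; ring
  have hFh0 : Fh 0 = (sf : ℂ) := by
    rw [hFh]
    simp only [hip0, cc_zero, mul_one]
    rw [hsf]; push_cast; ring
  have hFneg : ∀ t : Fin d → ZMod 3, t ≠ 0 → Fh t = - Gh t := by
    intro t ht
    have h1 : Fh t + Gh t = ∑ a : Fin d → ZMod 3, cc (ip t a) := by
      rw [hFh, hGh, ← Finset.sum_add_distrib]
      apply Finset.sum_congr rfl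
      intro a _
      have hfg : (f a : ℂ) + (g a : ℂ) = 1 := by
        simp only [hg]; push_cast; ring
      rw [← add_mul, hfg, one_mul]
    have h2 : ∑ a : Fin d → ZMod 3, cc (ip t a) = 0 := by
      rw [Finset.sum_congr rfl fun a _ => by rw [ip_comm]]
      exact sum_cc_ip ht
    exact eq_neg_of_add_eq_zero_left (h1.trans h2)
  set Er : ℝ := ∑ a : Fin d → ZMod 3, ∑ b : Fin d → ZMod 3, f a * g b * g (-a - b) with hEr
  -- main Fourier identity
  have key1 : ((3:ℝ)^d : ℂ) * (Er : ℂ) = ∑ t : Fin d → ZMod 3, Fh t * Gh t * Gh t := by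
    have expand : ∀ t : Fin d → ZMod 3, Fh t * Gh t * Gh t
        = ∑ a : Fin d → ZMod 3, ∑ b : Fin d → ZMod 3, ∑ e : Fin d → ZMod 3,
            (f a : ℂ) * g b * g e * cc (ip t (a + b + e)) := by
      intro t
      rw [hFh, hGh]
      rw [Finset.sum_mul_sum]
      rw [Finset.sum_mul]
      apply Finset.sum_congr rfl; intro a _
      rw [Finset.sum_mul]
      apply Finset.sum_congr rfl; intro b _
      rw [Finset.mul_sum]
      apply Finset.sum_congr rfl; intro e _
      rw [ip_add, ip_add, cc_add, cc_add]
      ring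
    rw [Finset.sum_congr rfl fun t _ => expand t]
    have swap : ∑ t : Fin d → ZMod 3, ∑ a : Fin d → ZMod 3, ∑ b : Fin d → ZMod 3,
          ∑ e : Fin d → ZMod 3, (f a : ℂ) * g b * g e * cc (ip t (a + b + e))
        = ∑ a : Fin d → ZMod 3, ∑ b : Fin d → ZMod 3, ∑ e : Fin d → ZMod 3,
          ∑ t : Fin d → ZMod 3, (f a : ℂ) * g b * g e * cc (ip t (a + b + e)) := by
      rw [Finset.sum_comm]
      apply Finset.sum_congr rfl; intro a _
      rw [Finset.sum_comm]
      apply Finset.sum_congr rfl; intro b _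
      rw [Finset.sum_comm]
    rw [swap]
    have inner : ∀ a b : Fin d → ZMod 3,
        ∑ e : Fin d → ZMod 3, ∑ t : Fin d → ZMod 3,
            (f a : ℂ) * g b * g e * cc (ip t (a + b + e))
        = ((3:ℝ)^d : ℂ) * ((f a : ℂ) * g b * g (-a - b)) := by
      intro a b
      have step : ∀ e : Fin d → ZMod 3,
          ∑ t : Fin d → ZMod 3, (f a : ℂ) * g b * g e * cc (ip t (a + b + e))
          = if e = -a - b then ((3:ℝ)^d : ℂ) * ((f a : ℂ) * g b * g e) else 0 := by
        intro e
        rw [← Finset.mul_sum, sum_cc_ip_eq]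
        have hcond : (a + b + e = 0) = (e = -a - b) := by
          apply propext
          constructor
          · intro h
            have := eq_neg_of_add_eq_zero_right h
            rw [this]; abel
          · intro h
            rw [h]; abel
        simp only [hcond]
        split_ifs with he <;> push_cast <;> ring
      rw [Finset.sum_congr rfl fun e _ => step e]
      rw [Finset.sum_ite_eq' Finset.univ (-a - b)
        (fun e => ((3:ℝ)^d : ℂ) * ((f a : ℂ) * g b * g e))]
      rw [if_pos (Finset.mem_univ _)]
    rw [Finset.sum_congr rfl fun a _ => Finset.sum_congr rfl fun b _ => inner a b]
    rw [hEr]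
    push_cast
    rw [Finset.mul_sum]
    apply Finset.sum_congr rfl; intro a _
    rw [Finset.mul_sum]
  -- split off t = 0
  have key2 : ∑ t : Fin d → ZMod 3, Fh t * Gh t * Gh t
      = (sf:ℂ) * (sg:ℂ)^2 - ∑ t ∈ Finset.univ.erase (0 : Fin d → ZMod 3), (Gh t)^3 := by
    rw [← Finset.sum_erase_add _ _ (Finset.mem_univ (0 : Fin d → ZMod 3))]
    rw [hFh0, hGh0]
    rw [Finset.sum_congr rfl fun t ht =>
      (by rw [hFneg t (Finset.ne_of_mem_erase ht)]; ring :
        Fh t * Gh t * Gh t = -(Gh t)^3)]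
    rw [Finset.sum_neg_distrib]
    ring
  -- real part version
  have keyR : (3:ℝ)^d * Er
      = sf * sg^2 - ∑ t ∈ Finset.univ.erase (0 : Fin d → ZMod 3), ((Gh t)^3).re := by
    have h := congrArg Complex.re (key1.trans key2)
    rw [← Complex.ofReal_pow] at h
    rw [← Complex.ofReal_mul] at h
    rw [Complex.ofReal_re] at h
    rw [h, Complex.sub_re, Complex.re_sum, ← Complex.ofReal_pow, ← Complex.ofReal_mul,
      Complex.ofReal_re]
  -- per-character bound
  have hbound : ∀ t : Fin d → ZMod 3,
      -(sg/2 * Complex.normSq (Gh t)) ≤ ((Gh t)^3).re := by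
    intro t
    set A : ℝ := ∑ a ∈ Finset.univ.filter (fun a : Fin d → ZMod 3 => ip t a = 0), g a with hA
    set B : ℝ := ∑ a ∈ Finset.univ.filter (fun a : Fin d → ZMod 3 => ip t a = 1), g a with hB
    set C : ℝ := ∑ a ∈ Finset.univ.filter (fun a : Fin d → ZMod 3 => ip t a = 2), g a with hC
    have hA0 : 0 ≤ A := Finset.sum_nonneg fun a _ => hg0 a
    have hB0 : 0 ≤ B := Finset.sum_nonneg fun a _ => hg0 a
    have hC0 : 0 ≤ C := Finset.sum_nonneg fun a _ => hg0 a
    have hABC : A + B + C = sg := by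
      rw [hA, hB, hC, hsg]
      rw [← Finset.sum_fiberwise Finset.univ (fun a : Fin d → ZMod 3 => ip t a) g]
      rw [sum_zmod3 (fun v => ∑ a ∈ Finset.univ.filter
        (fun a : Fin d → ZMod 3 => ip t a = v), g a)]
    have piece : ∀ v : ZMod 3, ∑ a ∈ Finset.univ.filter
        (fun a : Fin d → ZMod 3 => ip t a = v), (g a : ℂ) * cc (ip t a)
        = ((∑ a ∈ Finset.univ.filter (fun a : Fin d → ZMod 3 => ip t a = v), g a : ℝ) : ℂ)
            * cc v := by
      intro v
      rw [Finset.sum_congr rfl (fun a ha => by rw [(Finset.mem_filter.mp ha).2])]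
      rw [← Finset.sum_mul]
      norm_cast
    have hGt : Gh t = (A:ℂ) + (B:ℂ)*ω + (C:ℂ)*ω^2 := by
      rw [hGh]
      beta_reduce
      rw [← Finset.sum_fiberwise Finset.univ (fun a : Fin d → ZMod 3 => ip t a)
        (fun a => (g a : ℂ) * cc (ip t a))]
      rw [sum_zmod3 (fun v => ∑ a ∈ Finset.univ.filter
        (fun a : Fin d → ZMod 3 => ip t a = v), (g a : ℂ) * cc (ip t a))]
      rw [piece 0, piece 1, piece 2, cc_zero, cc_one, cc_two]
      rw [← hA, ← hB, ← hC]
      ring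
    have hrc := re_cube hA0 hB0 hC0
    rw [hGt, ← hABC]
    exact hrc
  -- Parseval
  have parseval : ∑ t : Fin d → ZMod 3, Complex.normSq (Gh t)
      = (3:ℝ)^d * ∑ a : Fin d → ZMod 3, (g a)^2 := by
    have hc : (∑ t : Fin d → ZMod 3, (Complex.normSq (Gh t) : ℂ))
        = ((((3:ℝ)^d * ∑ a : Fin d → ZMod 3, (g a)^2 : ℝ)) : ℂ) := by
      rw [Finset.sum_congr rfl (fun t _ => (Complex.mul_conj (Gh t)).symm)]
      have expand : ∀ t : Fin d → ZMod 3, Gh t * (starRingEnd ℂ) (Gh t)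
          = ∑ a : Fin d → ZMod 3, ∑ b : Fin d → ZMod 3,
            (g a : ℂ) * g b * cc (ip t (a - b)) := by
        intro t
        rw [hGh, map_sum, Finset.sum_mul_sum]
        apply Finset.sum_congr rfl; intro a _
        apply Finset.sum_congr rfl; intro b _
        rw [map_mul, Complex.conj_ofReal, conj_cc, ip_sub, sub_eq_add_neg, cc_add]
        ring
      rw [Finset.sum_congr rfl fun t _ => expand t]
      have swap : ∑ t : Fin d → ZMod 3, ∑ a : Fin d → ZMod 3, ∑ b : Fin d → ZMod 3,
            (g a : ℂ) * g b * cc (ip t (a - b))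
          = ∑ a : Fin d → ZMod 3, ∑ b : Fin d → ZMod 3, ∑ t : Fin d → ZMod 3,
            (g a : ℂ) * g b * cc (ip t (a - b)) := by
        rw [Finset.sum_comm]
        apply Finset.sum_congr rfl; intro a _
        rw [Finset.sum_comm]
      rw [swap]
      have inner : ∀ a : Fin d → ZMod 3,
          ∑ b : Fin d → ZMod 3, ∑ t : Fin d → ZMod 3, (g a : ℂ) * g b * cc (ip t (a - b))
          = ((3:ℝ)^d : ℂ) * ((g a : ℂ))^2 := by
        intro a
        have step : ∀ b : Fin d → ZMod 3,
            ∑ t : Fin d → ZMod 3, (g a : ℂ) * g b * cc (ip t (a - b))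
            = if b = a then ((3:ℝ)^d : ℂ) * ((g a : ℂ) * g b) else 0 := by
          intro b
          rw [← Finset.mul_sum, sum_cc_ip_eq]
          have hcond : (a - b = 0) = (b = a) := by
            apply propext; constructor
            · intro h; exact (sub_eq_zero.mp h).symm
            · intro h; rw [h, sub_self]
          simp only [hcond]
          split_ifs with he <;> push_cast <;> ring
        rw [Finset.sum_congr rfl fun b _ => step b]
        rw [Finset.sum_ite_eq' Finset.univ a
          (fun b => ((3:ℝ)^d : ℂ) * ((g a : ℂ) * g b)), if_pos (Finset.mem_univ _)]
        ring
      rw [Finset.sum_congr rfl fun a _ => inner a, ← Finset.mul_sum]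
      push_cast
      ring
    have h := congrArg Complex.re hc
    rw [Complex.re_sum] at h
    simp only [Complex.ofReal_re] at h
    exact h
  -- sum bound over nonzero frequencies
  have hsg0 : 0 ≤ sg := Finset.sum_nonneg fun a _ => hg0 a
  have hsf0 : 0 ≤ sf := Finset.sum_nonneg fun a _ => (hf a).1
  have hgsq : ∑ a : Fin d → ZMod 3, (g a)^2 ≤ sg := by
    rw [hsg]; apply Finset.sum_le_sum; intro a _; nlinarith [hg0 a, hg1 a]
  have h2 : ∑ t ∈ Finset.univ.erase (0 : Fin d → ZMod 3), Complex.normSq (Gh t)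
      = (3:ℝ)^d * (∑ a : Fin d → ZMod 3, (g a)^2) - sg^2 := by
    have h3 := Finset.sum_erase_add Finset.univ (fun t => Complex.normSq (Gh t))
      (Finset.mem_univ (0 : Fin d → ZMod 3))
    have h4 : Complex.normSq (Gh 0) = sg^2 := by
      rw [hGh0, Complex.normSq_ofReal]; ring
    simp only [h4, parseval] at h3
    linarith
  have hsum_bound : -(sg/2 * ((3:ℝ)^d * (∑ a : Fin d → ZMod 3, (g a)^2) - sg^2))
      ≤ ∑ t ∈ Finset.univ.erase (0 : Fin d → ZMod 3), ((Gh t)^3).re := by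
    have hle := Finset.sum_le_sum
      (fun t (_ : t ∈ Finset.univ.erase (0 : Fin d → ZMod 3)) => hbound t)
    rw [Finset.sum_neg_distrib, ← Finset.mul_sum, h2] at hle
    exact hle
  have hEb : (3:ℝ)^d * Er ≤ 3/2 * (sf * sg^2) := by
    rw [keyR]
    nlinarith [hsum_bound, hgsq, hsg0, hN, hsfg, hsf0,
      mul_le_mul_of_nonneg_left hgsq (mul_nonneg hN.le hsg0)]
  -- rewrite the goal
  have hLHS : (∑ x : Fin d → ZMod 3, ∑ y : Fin d → ZMod 3,
      f x * (1 - f (x + y)) * (1 - f (x + y + y))) = Er := by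
    rw [hEr]
    apply Finset.sum_congr rfl; intro x _
    rw [← Equiv.sum_comp (Equiv.addLeft x)
      (fun b : Fin d → ZMod 3 => f x * g b * g (-x - b))]
    apply Finset.sum_congr rfl; intro y _
    have hxy : x + y + y = -x - (x + y) := by
      funext i
      have hz : ∀ a b : ZMod 3, a + b + b = -a - (a + b) := by decide
      have : (x + y + y) i = (-x - (x + y)) i := hz (x i) (y i)
      exact this
    simp only [Equiv.coe_addLeft, hg]
    rw [hxy]
  rw [hLHS, havg]
  have h1avg : 1 - sf / (3:ℝ)^d = sg / (3:ℝ)^d := by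
    field_simp
    linarith
  rw [h1avg]
  rw [div_le_iff₀ (by positivity : (0:ℝ) < (3:ℝ)^d * (3:ℝ)^d)]
  have expand2 : 3/2 * (sf / (3:ℝ)^d) * (sg/(3:ℝ)^d)^2 * ((3:ℝ)^d * (3:ℝ)^d)
      = (3/2 * (sf * sg^2)) / (3:ℝ)^d := by
    field_simp
  rw [expand2, le_div_iff₀ hN]
  nlinarith [hEb]

end WordGrid
end
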